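/- If a discrete-time cocycle A : Θ → SL(d,ℝ) admits a natural continuous-time extension Φ (a continuous cocycle over the suspension flow with Φ^n_{(θ,0)} = A^n_θ for all n ∈ ℤ), then the map A : Θ → SL(d,ℝ) is nullhomotopic, i.e., homotopic to the constant identity map. -/
import Mathlib


/-- The special linear group `SL(d, ℝ)`. -/
abbrev SL (d : ℕ) := Matrix.SpecialLinearGroup (Fin d) ℝ

/-- `SL(d,ℝ)` carries the subspace topology of the matrix space. -/
instance {d : ℕ} : TopologicalSpace (SL d) :=
  TopologicalSpace.induced (fun A : SL d => (A : Matrix (Fin d) (Fin d) ℝ)) inferInstance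

/-- Forward products `A_{φ^{n-1}θ} ⋯ A_{φθ} A_θ`. -/
def fwd {Θ : Type*} {d : ℕ} (φ : Θ → Θ) (A : Θ → SL d) : ℕ → Θ → SL d
  | 0, _ => 1
  | n + 1, θ => fwd φ A n (φ θ) * A θ

/-- Backward products `A_{φ^{-n}θ}⁻¹ ⋯ A_{φ^{-1}θ}⁻¹` (here `ψ = φ⁻¹`). -/
def bwd {Θ : Type*} {d : ℕ} (ψ : Θ → Θ) (A : Θ → SL d) : ℕ → Θ → SL d
  | 0, _ => 1
  | n + 1, θ => bwd ψ A n (ψ θ) * (A (ψ θ))⁻¹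

/-- The two-sided `n`-step map of a cocycle `A` over the invertible driving `φ`. -/
def nstep {Θ : Type*} {d : ℕ} (φ : Equiv.Perm Θ) (A : Θ → SL d) (n : ℤ) (θ : Θ) : SL d :=
  if 0 ≤ n then fwd φ A n.toNat θ else bwd φ.symm A (-n).toNat θ

/-- The suspension flow over `φ` on the mapping torus, in fundamental-domain coordinates:
`φ^t (θ, r) = (φ^{⌊r+t⌋} θ, r + t mod 1)`. -/
noncomputable def susp {Θ : Type*} (φ : Equiv.Perm Θ) (t : ℝ) : Θ × ℝ → Θ × ℝ :=
  fun p => ((φ ^ ⌊p.2 + t⌋) p.1, Int.fract (p.2 + t))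

/-- If a discrete-time cocycle `A : Θ → SL(d,ℝ)` admits a natural continuous-time extension
`Φ` (a continuous cocycle over the suspension flow with `Φ^n_{(θ,0)} = A^n_θ` for all
`n ∈ ℤ`), then `A` is nullhomotopic, i.e. homotopic to the constant identity map. -/
theorem natural_extension_implies_nullhomotopic {Θ : Type*} [TopologicalSpace Θ]
    [CompactSpace Θ] {d : ℕ}
    (φ : Homeomorph Θ Θ) (Φ : Θ × ℝ → ℝ → SL d)
    (hΦcont : Continuous fun p : (Θ × ℝ) × ℝ => Φ p.1 p.2)
    (hΦ0 : ∀ ω : Θ × ℝ, Φ ω 0 = 1)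
    (hΦcoc : ∀ (ω : Θ × ℝ) (s t : ℝ), Φ ω (s + t) = Φ (susp φ.toEquiv s ω) t * Φ ω s)
    (A : Θ → SL d) (hAcont : Continuous A)
    (hnat : ∀ (n : ℤ) (θ : Θ), Φ (θ, 0) (n : ℝ) = nstep φ.toEquiv A n θ) :
    ContinuousMap.Homotopic ⟨A, hAcont⟩ (ContinuousMap.const Θ (1 : SL d)) := by
  refine ContinuousMap.Homotopic.symm ⟨{
    toFun := fun p => Φ (p.2, 0) (p.1 : ℝ)
    continuous_toFun := hΦcont.comp ((((continuous_snd.prodMk continuous_const)).prodMk (continuous_subtype_val.comp continuous_fst)))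
    map_zero_left := fun θ => by simpa using hΦ0 (θ, 0)
    map_one_left := fun θ => by
      have h := hnat 1 θ
      simp only [Int.cast_one] at h
      simpa [nstep, fwd] using h }⟩
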